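/- Let t_k = k + β with β > −1, or t_k = k^α with 1/2 < α < 1. Let f : ℝ → ℂ be continuous with f ∈ L¹(ℝ) and f̂ ∈ L¹(ℝ), where f̂(λ) = ∫_ℝ f(x) e^{−iλx} dx, and fix y ∈ ℝ. Then ∫_ℝ f(x) ψ^{(N)}_{r,s}(y − x) dx → f(y) as N−|r| and N−|s| tend to infinity: for every ε > 0 there exists M₀ such that for all integers N, r, s with r < s, |r| < N, |s| < N, N−|r| ≥ M₀ and N−|s| ≥ M₀, one has |∫_ℝ f(x) ψ^{(N)}_{r,s}(y − x) dx − f(y)| ≤ ε. -/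

import Mathlib

/-- `F_{N,r,s}(λ)` from the paper: a product of inverted Weierstrass factors. -/
noncomputable def Fprod (t : ℤ → ℝ) (N r s : ℤ) (l : ℝ) : ℂ :=
  (∏ k ∈ Finset.Icc (N - s + 1) (N - r),
      ((1 - Complex.I * (l : ℂ) / (t k : ℂ)) * Complex.exp (Complex.I * (l : ℂ) / (t k : ℂ)))⁻¹) *
  ∏ k ∈ Finset.Icc (N + r + 1) (N + s),
      ((1 + Complex.I * (l : ℂ) / (t k : ℂ)) *
        Complex.exp (-(Complex.I * (l : ℂ) / (t k : ℂ))))⁻¹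

/-- `ψ^{(N)}_{r,s}(x) = (1/2π) ∫_ℝ e^{iλx} F_{N,r,s}(λ) dλ`. -/
noncomputable def psiK (t : ℤ → ℝ) (N r s : ℤ) (x : ℝ) : ℂ :=
  ((1 / (2 * Real.pi) : ℝ) : ℂ) *
    ∫ l : ℝ, Complex.exp (Complex.I * (l : ℂ) * (x : ℂ)) * Fprod t N r s l

open MeasureTheory Complex Filter

-- h(u) = (1 - I u) exp(I u)
noncomputable def hfac (u : ℝ) : ℂ := (1 - Complex.I * u) * Complex.exp (Complex.I * u)

lemma one_le_norm_hfac (u : ℝ) : 1 ≤ ‖hfac u‖ := by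
  have h1 : ‖Complex.exp (Complex.I * u)‖ = 1 := by
    simp [Complex.norm_exp]
  have h2 : (1 : ℝ) ≤ ‖(1 : ℂ) - Complex.I * u‖ := by
    have := Complex.abs_re_le_norm (1 - Complex.I * u)
    simp at this
    simpa using this
  calc (1:ℝ) = 1 * 1 := by ring
  _ ≤ ‖(1:ℂ) - Complex.I * u‖ * ‖Complex.exp (Complex.I * u)‖ := by
      rw [h1]; simpa using h2
  _ = ‖hfac u‖ := (norm_mul _ _).symm

lemma hfacDeriv (x : ℝ) : HasDerivAt hfac ((x : ℂ) * Complex.exp (Complex.I * x)) x := by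
  have hx : HasDerivAt (fun x : ℝ => (x : ℂ)) 1 x := by
    simpa using (hasDerivAt_id x).ofReal_comp
  have h1 : HasDerivAt (fun x : ℝ => Complex.I * (x : ℂ)) Complex.I x := by
    simpa using hx.const_mul Complex.I
  have h2 : HasDerivAt (fun x : ℝ => (1 : ℂ) - Complex.I * (x : ℂ)) (-Complex.I) x := by
    simpa using h1.const_sub 1
  have h3 : HasDerivAt (fun x : ℝ => Complex.exp (Complex.I * (x : ℂ)))
      (Complex.exp (Complex.I * (x : ℂ)) * Complex.I) x := h1.cexp
  have h4 := h2.mul h3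
  convert h4 using 1
  · rfl
  · rfl
  have hI := Complex.I_sq
  linear_combination ((x : ℂ) * Complex.exp (Complex.I * (x : ℂ))) * hI

lemma norm_hfac_sub_one (u : ℝ) : ‖hfac u - 1‖ ≤ u ^ 2 := by
  have key := Convex.norm_image_sub_le_of_norm_hasDerivWithin_le
    (f := hfac) (f' := fun x : ℝ => (x : ℂ) * Complex.exp (Complex.I * x)) (C := |u|)
    (s := Set.uIcc (0 : ℝ) u)
    (fun x _ => (hfacDeriv x).hasDerivWithinAt)
    (fun x hx => by
      have hb : |x| ≤ |u| := by
        rw [Set.mem_uIcc] at hx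
        have h1 := le_abs_self u
        have h2 := neg_abs_le u
        rw [abs_le]
        rcases hx with ⟨ha, hb⟩ | ⟨ha, hb⟩ <;> constructor <;> linarith
      calc ‖(x : ℂ) * Complex.exp (Complex.I * x)‖
          = |x| := by simp [Complex.norm_exp]
        _ ≤ |u| := hb)
    (convex_uIcc 0 u) (Set.left_mem_uIcc) (Set.right_mem_uIcc)
  have h0 : hfac 0 = 1 := by simp [hfac]
  have : ‖hfac u - 1‖ ≤ |u| * ‖u - 0‖ := by
    simpa [h0] using key
  calc ‖hfac u - 1‖ ≤ |u| * ‖u - 0‖ := this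
    _ = u ^ 2 := by rw [sub_zero, Real.norm_eq_abs, ← abs_mul, abs_mul_self]; ring

lemma hfac_ne (u : ℝ) : hfac u ≠ 0 := by
  intro h
  have := one_le_norm_hfac u
  rw [h] at this; simp at this; linarith

lemma norm_inv_hfac_le_one (u : ℝ) : ‖(hfac u)⁻¹‖ ≤ 1 := by
  rw [norm_inv]
  exact inv_le_one_of_one_le₀ (one_le_norm_hfac u)

lemma norm_inv_hfac_sub_one (u : ℝ) : ‖(hfac u)⁻¹ - 1‖ ≤ u ^ 2 := by
  have hne := hfac_ne u
  have : (hfac u)⁻¹ - 1 = (1 - hfac u) * (hfac u)⁻¹ := by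
    field_simp
  rw [this, norm_mul, norm_inv]
  calc ‖1 - hfac u‖ * ‖hfac u‖⁻¹ ≤ (u ^ 2) * 1 := by
        apply mul_le_mul
        · rw [← norm_neg]; simpa using norm_hfac_sub_one u
        · exact inv_le_one_of_one_le₀ (one_le_norm_hfac u)
        · positivity
        · positivity
    _ = u ^ 2 := by ring

lemma norm_hfac (u : ℝ) : ‖hfac u‖ = Real.sqrt (1 + u ^ 2) := by
  unfold hfac
  rw [norm_mul]
  have h1 : ‖Complex.exp (Complex.I * u)‖ = 1 := by
    simp [Complex.norm_exp]
  rw [h1, mul_one]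
  rw [Complex.norm_def, Complex.normSq_apply]
  congr 1
  simp
  ring

lemma fac1_eq (l T : ℝ) :
    (1 - Complex.I * (l : ℂ) / (T : ℂ)) * Complex.exp (Complex.I * (l : ℂ) / (T : ℂ))
      = hfac (l / T) := by
  have h : Complex.I * (l : ℂ) / (T : ℂ) = Complex.I * ((l / T : ℝ) : ℂ) := by
    push_cast; ring
  rw [h]; rfl

lemma fac2_eq (l T : ℝ) :
    (1 + Complex.I * (l : ℂ) / (T : ℂ)) * Complex.exp (-(Complex.I * (l : ℂ) / (T : ℂ)))
      = hfac (-(l / T)) := by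
  have h : -(Complex.I * (l : ℂ) / (T : ℂ)) = Complex.I * ((-(l / T) : ℝ) : ℂ) := by
    push_cast; ring
  unfold hfac
  rw [← h]
  ring_nf

lemma norm_prod_le_one {ι : Type*} (S : Finset ι) (g : ι → ℂ)
    (hb : ∀ i ∈ S, ‖g i‖ ≤ 1) : ‖∏ i ∈ S, g i‖ ≤ 1 := by
  calc ‖∏ i ∈ S, g i‖ ≤ ∏ i ∈ S, ‖g i‖ := S.norm_prod_le g
    _ ≤ 1 := Finset.prod_le_one (fun i _ => norm_nonneg _) hb

lemma norm_prod_sub_one_le {ι : Type*} (S : Finset ι) (g : ι → ℂ)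
    (hb : ∀ i ∈ S, ‖g i‖ ≤ 1) : ‖(∏ i ∈ S, g i) - 1‖ ≤ ∑ i ∈ S, ‖g i - 1‖ := by
  classical
  induction S using Finset.induction_on with
  | empty => simp
  | @insert a S' hnotmem ih =>
    rw [Finset.prod_insert hnotmem, Finset.sum_insert hnotmem]
    have hb' : ∀ i ∈ S', ‖g i‖ ≤ 1 := fun i hi => hb i (Finset.mem_insert_of_mem hi)
    have ha : ‖g a‖ ≤ 1 := hb a (Finset.mem_insert_self a S')
    have key : g a * ∏ i ∈ S', g i - 1 = g a * ((∏ i ∈ S', g i) - 1) + (g a - 1) := by ring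
    rw [key]
    calc ‖g a * ((∏ i ∈ S', g i) - 1) + (g a - 1)‖
        ≤ ‖g a * ((∏ i ∈ S', g i) - 1)‖ + ‖g a - 1‖ := norm_add_le _ _
      _ = ‖g a‖ * ‖(∏ i ∈ S', g i) - 1‖ + ‖g a - 1‖ := by rw [norm_mul]
      _ ≤ 1 * (∑ i ∈ S', ‖g i - 1‖) + ‖g a - 1‖ :=
          add_le_add_left (mul_le_mul ha (ih hb') (norm_nonneg _) zero_le_one) _
      _ = ‖g a - 1‖ + ∑ i ∈ S', ‖g i - 1‖ := by ring

lemma Fprod_eq (t : ℤ → ℝ) (N r s : ℤ) (l : ℝ) :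
    Fprod t N r s l =
      (∏ k ∈ Finset.Icc (N - s + 1) (N - r), (hfac (l / t k))⁻¹) *
      ∏ k ∈ Finset.Icc (N + r + 1) (N + s), (hfac (-(l / t k)))⁻¹ := by
  unfold Fprod
  congr 1
  · exact Finset.prod_congr rfl (fun k _ => by rw [fac1_eq])
  · exact Finset.prod_congr rfl (fun k _ => by rw [fac2_eq])

lemma Fprod_norm_le_one (t : ℤ → ℝ) (N r s : ℤ) (l : ℝ) : ‖Fprod t N r s l‖ ≤ 1 := by
  rw [Fprod_eq, norm_mul]
  calc ‖∏ k ∈ Finset.Icc (N - s + 1) (N - r), (hfac (l / t k))⁻¹‖ *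
        ‖∏ k ∈ Finset.Icc (N + r + 1) (N + s), (hfac (-(l / t k)))⁻¹‖ ≤ 1 * 1 := by
        apply mul_le_mul
        · exact norm_prod_le_one _ _ (fun i _ => norm_inv_hfac_le_one _)
        · exact norm_prod_le_one _ _ (fun i _ => norm_inv_hfac_le_one _)
        · positivity
        · positivity
    _ = 1 := by ring

lemma Fprod_sub_one_le (t : ℤ → ℝ) (N r s : ℤ) (l : ℝ) :
    ‖Fprod t N r s l - 1‖ ≤
      l ^ 2 * ((∑ k ∈ Finset.Icc (N - s + 1) (N - r), ((t k)⁻¹) ^ 2) +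
        ∑ k ∈ Finset.Icc (N + r + 1) (N + s), ((t k)⁻¹) ^ 2) := by
  rw [Fprod_eq]
  set P1 := ∏ k ∈ Finset.Icc (N - s + 1) (N - r), (hfac (l / t k))⁻¹ with hP1
  set P2 := ∏ k ∈ Finset.Icc (N + r + 1) (N + s), (hfac (-(l / t k)))⁻¹ with hP2
  have hP1n : ‖P1‖ ≤ 1 := norm_prod_le_one _ _ (fun i _ => norm_inv_hfac_le_one _)
  have key : P1 * P2 - 1 = P1 * (P2 - 1) + (P1 - 1) := by ring
  have h1 : ‖P1 - 1‖ ≤ ∑ k ∈ Finset.Icc (N - s + 1) (N - r), l ^ 2 * ((t k)⁻¹) ^ 2 := by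
    refine le_trans (norm_prod_sub_one_le _ _ (fun i _ => norm_inv_hfac_le_one _)) ?_
    apply Finset.sum_le_sum
    intro k _
    refine le_trans (norm_inv_hfac_sub_one _) ?_
    rw [div_pow]
    rw [div_eq_mul_inv, ← inv_pow]
  have h2 : ‖P2 - 1‖ ≤ ∑ k ∈ Finset.Icc (N + r + 1) (N + s), l ^ 2 * ((t k)⁻¹) ^ 2 := by
    refine le_trans (norm_prod_sub_one_le _ _ (fun i _ => norm_inv_hfac_le_one _)) ?_
    apply Finset.sum_le_sum
    intro k _
    refine le_trans (norm_inv_hfac_sub_one _) ?_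
    have hsq : (-(l / t k)) ^ 2 = (l / t k) ^ 2 := by ring
    rw [hsq, div_pow, div_eq_mul_inv, ← inv_pow]
  rw [key]
  calc ‖P1 * (P2 - 1) + (P1 - 1)‖ ≤ ‖P1 * (P2 - 1)‖ + ‖P1 - 1‖ := norm_add_le _ _
    _ = ‖P1‖ * ‖P2 - 1‖ + ‖P1 - 1‖ := by rw [norm_mul]
    _ ≤ 1 * (∑ k ∈ Finset.Icc (N + r + 1) (N + s), l ^ 2 * ((t k)⁻¹) ^ 2) +
        ∑ k ∈ Finset.Icc (N - s + 1) (N - r), l ^ 2 * ((t k)⁻¹) ^ 2 :=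
        add_le_add (mul_le_mul hP1n h2 (norm_nonneg _) zero_le_one) h1
    _ = l ^ 2 * ((∑ k ∈ Finset.Icc (N - s + 1) (N - r), ((t k)⁻¹) ^ 2) +
        ∑ k ∈ Finset.Icc (N + r + 1) (N + s), ((t k)⁻¹) ^ 2) := by
        rw [← Finset.mul_sum, ← Finset.mul_sum]; ring

lemma hfac_cont : Continuous hfac := by
  unfold hfac
  fun_prop

lemma cont_inv_hfac_comp {φ : ℝ → ℝ} (hφ : Continuous φ) :
    Continuous (fun l => (hfac (φ l))⁻¹) :=
  ((hfac_cont.comp hφ).inv₀ (fun l => hfac_ne (φ l)))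

lemma Fprod_cont (t : ℤ → ℝ) (N r s : ℤ) : Continuous (fun l => Fprod t N r s l) := by
  have he : (fun l => Fprod t N r s l) = fun l =>
      (∏ k ∈ Finset.Icc (N - s + 1) (N - r), (hfac (l / t k))⁻¹) *
      ∏ k ∈ Finset.Icc (N + r + 1) (N + s), (hfac (-(l / t k)))⁻¹ := by
    funext l; exact Fprod_eq t N r s l
  rw [he]
  apply Continuous.mul
  · apply continuous_finset_prod
    intro k _
    exact cont_inv_hfac_comp (by fun_prop)
  · apply continuous_finset_prod
    intro k _
    exact cont_inv_hfac_comp (by fun_prop)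

lemma norm_inv_hfac_decay {T : ℝ} (hT : 0 < T) (l : ℝ) :
    ‖(hfac (l / T))⁻¹‖ ≤ Real.sqrt (max 1 (T ^ 2)) / Real.sqrt (1 + l ^ 2) := by
  have key : (1 + l ^ 2) ≤ max 1 (T ^ 2) * (1 + (l / T) ^ 2) := by
    have h1 : (1 : ℝ) ≤ max 1 (T ^ 2) := le_max_left _ _
    have h2 : l ^ 2 ≤ max 1 (T ^ 2) * (l / T) ^ 2 := by
      have h3 : T ^ 2 * (l / T) ^ 2 = l ^ 2 := by field_simp
      have h4 : T ^ 2 * (l / T) ^ 2 ≤ max 1 (T ^ 2) * (l / T) ^ 2 := by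
        apply mul_le_mul_of_nonneg_right (le_max_right _ _) (by positivity)
      linarith
    nlinarith [sq_nonneg (l / T), h2]
  have ha : 0 < Real.sqrt (1 + (l / T) ^ 2) := Real.sqrt_pos.mpr (by positivity)
  have hb : 0 < Real.sqrt (1 + l ^ 2) := Real.sqrt_pos.mpr (by positivity)
  rw [norm_inv, norm_hfac, inv_eq_one_div, div_le_div_iff₀ ha hb, one_mul,
    ← Real.sqrt_mul (by positivity)]
  exact Real.sqrt_le_sqrt key

lemma Fprod_decay (t : ℤ → ℝ) (N r s : ℤ) (hrs : r < s)
    (h1 : 0 < t (N - r)) (h2 : 0 < t (N + s)) (l : ℝ) :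
    ‖Fprod t N r s l‖ ≤
      (Real.sqrt (max 1 ((t (N - r)) ^ 2)) * Real.sqrt (max 1 ((t (N + s)) ^ 2)))
        * (1 + l ^ 2)⁻¹ := by
  rw [Fprod_eq, norm_mul]
  have hm1 : (N - r) ∈ Finset.Icc (N - s + 1) (N - r) := by
    simp only [Finset.mem_Icc]; omega
  have hm2 : (N + s) ∈ Finset.Icc (N + r + 1) (N + s) := by
    simp only [Finset.mem_Icc]; omega
  have hb1 : ‖∏ k ∈ Finset.Icc (N - s + 1) (N - r), (hfac (l / t k))⁻¹‖
      ≤ Real.sqrt (max 1 ((t (N - r)) ^ 2)) / Real.sqrt (1 + l ^ 2) := by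
    rw [← Finset.mul_prod_erase _ _ hm1, norm_mul]
    calc ‖(hfac (l / t (N - r)))⁻¹‖ * ‖∏ k ∈ _, (hfac (l / t k))⁻¹‖
        ≤ (Real.sqrt (max 1 ((t (N - r)) ^ 2)) / Real.sqrt (1 + l ^ 2)) * 1 := by
          apply mul_le_mul (norm_inv_hfac_decay h1 l)
            (norm_prod_le_one _ _ (fun i _ => norm_inv_hfac_le_one _)) (norm_nonneg _)
            (by positivity)
      _ = _ := by ring
  have hb2 : ‖∏ k ∈ Finset.Icc (N + r + 1) (N + s), (hfac (-(l / t k)))⁻¹‖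
      ≤ Real.sqrt (max 1 ((t (N + s)) ^ 2)) / Real.sqrt (1 + l ^ 2) := by
    rw [← Finset.mul_prod_erase _ _ hm2, norm_mul]
    have hneg : ‖(hfac (-(l / t (N + s))))⁻¹‖ ≤
        Real.sqrt (max 1 ((t (N + s)) ^ 2)) / Real.sqrt (1 + l ^ 2) := by
      have := norm_inv_hfac_decay h2 (-l)
      rw [neg_div] at this
      simpa using this
    calc ‖(hfac (-(l / t (N + s))))⁻¹‖ * ‖∏ k ∈ _, (hfac (-(l / t k)))⁻¹‖
        ≤ (Real.sqrt (max 1 ((t (N + s)) ^ 2)) / Real.sqrt (1 + l ^ 2)) * 1 := by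
          apply mul_le_mul hneg
            (norm_prod_le_one _ _ (fun i _ => norm_inv_hfac_le_one _)) (norm_nonneg _)
            (by positivity)
      _ = _ := by ring
  have hsq : Real.sqrt (1 + l ^ 2) * Real.sqrt (1 + l ^ 2) = 1 + l ^ 2 :=
    Real.mul_self_sqrt (by positivity)
  calc ‖∏ k ∈ Finset.Icc (N - s + 1) (N - r), (hfac (l / t k))⁻¹‖ *
        ‖∏ k ∈ Finset.Icc (N + r + 1) (N + s), (hfac (-(l / t k)))⁻¹‖
      ≤ (Real.sqrt (max 1 ((t (N - r)) ^ 2)) / Real.sqrt (1 + l ^ 2)) *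
        (Real.sqrt (max 1 ((t (N + s)) ^ 2)) / Real.sqrt (1 + l ^ 2)) := by
        apply mul_le_mul hb1 hb2 (norm_nonneg _) (by positivity)
    _ = (Real.sqrt (max 1 ((t (N - r)) ^ 2)) * Real.sqrt (max 1 ((t (N + s)) ^ 2)))
        * (1 + l ^ 2)⁻¹ := by
        rw [div_mul_div_comm, hsq]; ring

lemma Fprod_integrable (t : ℤ → ℝ) (N r s : ℤ) (hrs : r < s)
    (h1 : 0 < t (N - r)) (h2 : 0 < t (N + s)) :
    Integrable (fun l => Fprod t N r s l) := by
  apply Integrable.mono'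
    ((integrable_inv_one_add_sq).const_mul
      (Real.sqrt (max 1 ((t (N - r)) ^ 2)) * Real.sqrt (max 1 ((t (N + s)) ^ 2))))
    (Fprod_cont t N r s).aestronglyMeasurable
  exact Filter.Eventually.of_forall (Fprod_decay t N r s hrs h1 h2)

lemma t_pos (t : ℤ → ℝ)
    (ht : (∃ β : ℝ, -1 < β ∧ ∀ k : ℤ, 1 ≤ k → t k = (k : ℝ) + β) ∨
          (∃ α : ℝ, 1 / 2 < α ∧ α < 1 ∧ ∀ k : ℤ, 1 ≤ k → t k = (k : ℝ) ^ α)) :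
    ∀ k : ℤ, 1 ≤ k → 0 < t k := by
  intro k hk
  have hk' : (1 : ℝ) ≤ (k : ℝ) := by exact_mod_cast hk
  rcases ht with ⟨β, hβ, he⟩ | ⟨α, hα1, hα2, he⟩
  · rw [he k hk]; linarith
  · rw [he k hk]; exact Real.rpow_pos_of_pos (by linarith) α

lemma base_summable : Summable (fun n : ℕ => (((n : ℝ) + 1)⁻¹) ^ 2) := by
  have b1 : Summable (fun n : ℕ => 1 / (n : ℝ) ^ 2) :=
    Real.summable_one_div_nat_pow.mpr one_lt_two
  have b2 := (summable_nat_add_iff 1).mpr b1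
  apply b2.congr
  intro n
  push_cast
  rw [inv_pow, one_div]

lemma t_summable (t : ℤ → ℝ)
    (ht : (∃ β : ℝ, -1 < β ∧ ∀ k : ℤ, 1 ≤ k → t k = (k : ℝ) + β) ∨
          (∃ α : ℝ, 1 / 2 < α ∧ α < 1 ∧ ∀ k : ℤ, 1 ≤ k → t k = (k : ℝ) ^ α)) :
    Summable (fun n : ℕ => ((t ((n : ℤ) + 1))⁻¹) ^ 2) := by
  rcases ht with ⟨β, hβ, he⟩ | ⟨α, hα1, hα2, he⟩
  · -- t k = k + β
    have hval : ∀ n : ℕ, t ((n : ℤ) + 1) = (n : ℝ) + 1 + β := by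
      intro n
      rw [he ((n : ℤ) + 1) (by omega)]
      push_cast; ring
    set k₀ : ℕ := ⌈|β|⌉₊ with hk₀
    have hk₀ge : |β| ≤ (k₀ : ℝ) := Nat.le_ceil _
    have hs : Summable (fun n : ℕ => ((((n + k₀ : ℕ) : ℝ) + 1 + β)⁻¹) ^ 2) := by
      apply Summable.of_nonneg_of_le (fun n => by positivity) _ base_summable
      intro n
      have hβ' : -β ≤ |β| := neg_le_abs β
      have h1 : (0 : ℝ) < (n : ℝ) + 1 := by positivity
      have h2 : (n : ℝ) + 1 ≤ ((n + k₀ : ℕ) : ℝ) + 1 + β := by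
        push_cast; linarith
      have h3 : (((n + k₀ : ℕ) : ℝ) + 1 + β)⁻¹ ≤ ((n : ℝ) + 1)⁻¹ :=
        inv_anti₀ h1 h2
      have h4 : (0 : ℝ) ≤ (((n + k₀ : ℕ) : ℝ) + 1 + β)⁻¹ := by
        apply inv_nonneg.mpr; linarith
      exact pow_le_pow_left₀ h4 h3 2
    have := (summable_nat_add_iff
      (f := fun n : ℕ => ((((n : ℕ) : ℝ) + 1 + β)⁻¹) ^ 2) k₀).mp hs
    apply this.congr
    intro n
    rw [hval n]
  · -- t k = k ^ α
    have hval : ∀ n : ℕ, t ((n : ℤ) + 1) = ((n : ℝ) + 1) ^ α := by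
      intro n
      rw [he ((n : ℤ) + 1) (by omega)]
      push_cast; ring_nf
    have hs : Summable (fun n : ℕ => ((((n : ℝ) + 1) ^ (α * 2))⁻¹)) := by
      have b1 : Summable (fun n : ℕ => (((n : ℝ)) ^ (α * 2))⁻¹) :=
        Real.summable_nat_rpow_inv.mpr (by linarith)
      have b2 := (summable_nat_add_iff 1).mpr b1
      apply b2.congr
      intro n
      push_cast
      ring_nf
    apply hs.congr
    intro n
    rw [hval n]
    have hx : (0 : ℝ) < (n : ℝ) + 1 := by positivity
    rw [inv_pow]
    congr 1
    rw [← Real.rpow_natCast (((n : ℝ) + 1) ^ α) 2, ← Real.rpow_mul hx.le]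
    norm_num

lemma tail_small (t : ℤ → ℝ)
    (ht : (∃ β : ℝ, -1 < β ∧ ∀ k : ℤ, 1 ≤ k → t k = (k : ℝ) + β) ∨
          (∃ α : ℝ, 1 / 2 < α ∧ α < 1 ∧ ∀ k : ℤ, 1 ≤ k → t k = (k : ℝ) ^ α))
    {δ : ℝ} (hδ : 0 < δ) :
    ∃ M₀ : ℤ, 1 ≤ M₀ ∧ ∀ S : Finset ℤ, (∀ k ∈ S, M₀ < k) →
      ∑ k ∈ S, ((t k)⁻¹) ^ 2 ≤ δ := by
  set u : ℕ → ℝ := fun n => ((t ((n : ℤ) + 1))⁻¹) ^ 2 with hu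
  have husum : Summable u := t_summable t ht
  have htend : Filter.Tendsto (fun m => ∑' n, u (n + m)) Filter.atTop (nhds 0) :=
    tendsto_sum_nat_add u
  have hev : ∀ᶠ m in Filter.atTop, (∑' n, u (n + m)) < δ ∧ 1 ≤ m := by
    refine (htend.eventually (gt_mem_nhds hδ)).and (Filter.eventually_ge_atTop 1)
  obtain ⟨m, hm, hm1⟩ := hev.exists
  refine ⟨(m : ℤ), by exact_mod_cast hm1, ?_⟩
  intro S hS
  have hval : ∀ k ∈ S, u ((k - m - 1).toNat + m) = ((t k)⁻¹) ^ 2 := by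
    intro k hk
    have hk' := hS k hk
    have harg : (((k - m - 1).toNat + m : ℕ) : ℤ) + 1 = k := by
      push_cast
      omega
    simp only [hu]
    rw [harg]
  have hinj : ∀ a ∈ S, ∀ b ∈ S, (a - m - 1).toNat = (b - m - 1).toNat → a = b := by
    intro a ha b hb hab
    have h1 := hS a ha
    have h2 := hS b hb
    omega
  have hsum_eq : ∑ n ∈ S.image (fun k : ℤ => (k - (m : ℤ) - 1).toNat), u (n + m)
      = ∑ k ∈ S, ((t k)⁻¹) ^ 2 := by
    rw [Finset.sum_image hinj]
    exact Finset.sum_congr rfl hval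
  have hle : ∑ n ∈ S.image (fun k : ℤ => (k - (m : ℤ) - 1).toNat), u (n + m) ≤ ∑' n, u (n + m) := by
    apply Summable.sum_le_tsum _ (fun i _ => by positivity)
    exact (summable_nat_add_iff m).mpr husum
  rw [← hsum_eq]
  exact le_trans hle hm.le

open Real in
lemma inversion_formula (f : ℝ → ℂ) (hf_cont : Continuous f) (hf_int : Integrable f)
    (hf_hat : Integrable
      (fun l : ℝ => ∫ x : ℝ, f x * Complex.exp (-(Complex.I * (l : ℂ) * (x : ℂ)))))
    (y : ℝ) :
    f y = ((1 / (2 * Real.pi) : ℝ) : ℂ) *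
      ∫ l : ℝ, Complex.exp (Complex.I * (l : ℂ) * (y : ℂ)) *
        ∫ x : ℝ, f x * Complex.exp (-(Complex.I * (l : ℂ) * (x : ℂ))) := by
  set hatf : ℝ → ℂ := fun l : ℝ => ∫ x : ℝ, f x * Complex.exp (-(Complex.I * (l : ℂ) * (x : ℂ)))
    with hhatf
  have hFeq : ∀ w : ℝ, FourierTransform.fourier f w = hatf (2 * Real.pi * w) := by
    intro w
    rw [Real.fourier_real_eq_integral_exp_smul]
    apply MeasureTheory.integral_congr_ae
    apply Filter.Eventually.of_forall
    intro v
    simp only [smul_eq_mul]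
    rw [mul_comm]
    congr 1
    push_cast
    ring
  have h2pi : (2 * Real.pi) ≠ 0 := by positivity
  have hInt2 : Integrable (FourierTransform.fourier f) := by
    apply (hf_hat.comp_mul_left' h2pi).congr
    apply Filter.Eventually.of_forall
    intro w
    exact (hFeq w).symm
  have hinv : FourierTransform.fourierInv (FourierTransform.fourier f) y = f y :=
    hf_int.fourierInv_fourier_eq hInt2 hf_cont.continuousAt
  rw [Real.fourierInv_eq_fourier_neg] at hinv
  rw [Real.fourier_real_eq_integral_exp_smul] at hinv
  set G : ℝ → ℂ := fun l => Complex.exp (Complex.I * (l : ℂ) * (y : ℂ)) * hatf l with hG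
  have hcongr : ∀ v : ℝ,
      Complex.exp (((-2) * Real.pi * v * (-y) : ℝ) * Complex.I) • FourierTransform.fourier f v
        = G (2 * Real.pi * v) := by
    intro v
    rw [smul_eq_mul, hFeq v, hG]
    simp only []
    congr 1
    push_cast
    ring
  have h1 : f y = ∫ v : ℝ, G (2 * Real.pi * v) := by
    rw [← hinv]
    apply MeasureTheory.integral_congr_ae
    apply Filter.Eventually.of_forall
    intro v
    exact hcongr v
  rw [h1, MeasureTheory.Measure.integral_comp_mul_left G (2 * Real.pi)]
  rw [abs_of_pos (by positivity : (0:ℝ) < (2 * Real.pi)⁻¹)]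
  rw [Complex.real_smul]
  norm_num

lemma norm_exp_I_mul_real (a : ℝ) : ‖Complex.exp (Complex.I * (a : ℂ))‖ = 1 := by
  simp [Complex.norm_exp]

lemma key_identity (t : ℤ → ℝ) (N r s : ℤ) (hrs : r < s)
    (h1 : 0 < t (N - r)) (h2 : 0 < t (N + s))
    (f : ℝ → ℂ) (hf_cont : Continuous f) (hf_int : Integrable f) (y : ℝ) :
    ∫ x : ℝ, f x * psiK t N r s (y - x) =
      ((1 / (2 * Real.pi) : ℝ) : ℂ) *
        ∫ l : ℝ, Complex.exp (Complex.I * (l : ℂ) * (y : ℂ)) * Fprod t N r s l *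
          ∫ x : ℝ, f x * Complex.exp (-(Complex.I * (l : ℂ) * (x : ℂ))) := by
  set c : ℂ := ((1 / (2 * Real.pi) : ℝ) : ℂ) with hc
  set C : ℝ := Real.sqrt (max 1 ((t (N - r)) ^ 2)) * Real.sqrt (max 1 ((t (N + s)) ^ 2)) with hC
  set F : ℝ → ℝ → ℂ :=
    fun x l => f x * (Complex.exp (Complex.I * (l : ℂ) * ((y - x : ℝ) : ℂ)) * Fprod t N r s l)
    with hF
  have hnorm : ∀ x l, ‖F x l‖ = ‖f x‖ * ‖Fprod t N r s l‖ := by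
    intro x l
    have harg : Complex.I * (l : ℂ) * ((y - x : ℝ) : ℂ)
        = Complex.I * ((l * (y - x) : ℝ) : ℂ) := by push_cast; ring
    simp only [hF, norm_mul, harg, norm_exp_I_mul_real]
    ring
  have hintF : Integrable (Function.uncurry F) ((volume : Measure ℝ).prod volume) := by
    apply Integrable.mono' ((hf_int.norm).mul_prod ((integrable_inv_one_add_sq).const_mul C))
    · apply Continuous.aestronglyMeasurable
      apply Continuous.mul (hf_cont.comp continuous_fst)
      apply Continuous.mul
      · apply Complex.continuous_exp.comp
        fun_prop
      · exact (Fprod_cont t N r s).comp continuous_snd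
    · apply Filter.Eventually.of_forall
      rintro ⟨x, l⟩
      have := Fprod_decay t N r s hrs h1 h2 l
      calc ‖Function.uncurry F (x, l)‖ = ‖f x‖ * ‖Fprod t N r s l‖ := hnorm x l
        _ ≤ ‖f x‖ * (C * (1 + l ^ 2)⁻¹) := by
            apply mul_le_mul_of_nonneg_left this (norm_nonneg _)
  have step1 : ∫ x : ℝ, f x * psiK t N r s (y - x) = c * ∫ x : ℝ, ∫ l : ℝ, F x l := by
    rw [← MeasureTheory.integral_const_mul]
    apply MeasureTheory.integral_congr_ae
    apply Filter.Eventually.of_forall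
    intro x
    simp only [psiK]
    rw [mul_comm (f x), mul_assoc]
    congr 1
    rw [← MeasureTheory.integral_mul_const]
    apply MeasureTheory.integral_congr_ae
    apply Filter.Eventually.of_forall
    intro l
    simp only [hF]
    ring
  have step2 : ∫ x : ℝ, ∫ l : ℝ, F x l = ∫ l : ℝ, ∫ x : ℝ, F x l :=
    MeasureTheory.integral_integral_swap hintF
  have step3 : ∀ l : ℝ, ∫ x : ℝ, F x l =
      Complex.exp (Complex.I * (l : ℂ) * (y : ℂ)) * Fprod t N r s l *
        ∫ x : ℝ, f x * Complex.exp (-(Complex.I * (l : ℂ) * (x : ℂ))) := by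
    intro l
    rw [← MeasureTheory.integral_const_mul]
    apply MeasureTheory.integral_congr_ae
    apply Filter.Eventually.of_forall
    intro x
    simp only [hF]
    have hexp : Complex.exp (Complex.I * (l : ℂ) * ((y - x : ℝ) : ℂ))
        = Complex.exp (Complex.I * (l : ℂ) * (y : ℂ)) *
          Complex.exp (-(Complex.I * (l : ℂ) * (x : ℂ))) := by
      rw [← Complex.exp_add]
      congr 1
      push_cast
      ring
    rw [hexp]
    ring
  rw [step1, step2]
  congr 1
  apply MeasureTheory.integral_congr_ae
  apply Filter.Eventually.of_forall
  intro l
  exact step3 l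

theorem integral_f_mul_psi_tendsto (t : ℤ → ℝ)
    (ht : (∃ β : ℝ, -1 < β ∧ ∀ k : ℤ, 1 ≤ k → t k = (k : ℝ) + β) ∨
          (∃ α : ℝ, 1 / 2 < α ∧ α < 1 ∧ ∀ k : ℤ, 1 ≤ k → t k = (k : ℝ) ^ α))
    (f : ℝ → ℂ) (hf_cont : Continuous f) (hf_int : MeasureTheory.Integrable f)
    (hf_hat : MeasureTheory.Integrable
      (fun l : ℝ => ∫ x : ℝ, f x * Complex.exp (-(Complex.I * (l : ℂ) * (x : ℂ)))))
    (y : ℝ) (ε : ℝ) (hε : 0 < ε) :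
    ∃ M₀ : ℤ, ∀ N r s : ℤ, r < s → |r| < N → |s| < N → M₀ ≤ N - |r| → M₀ ≤ N - |s| →
      ‖(∫ x : ℝ, f x * psiK t N r s (y - x)) - f y‖ ≤ ε := by
  have hπ : 0 < Real.pi := Real.pi_pos
  set hatf : ℝ → ℂ :=
    fun l : ℝ => ∫ x : ℝ, f x * Complex.exp (-(Complex.I * (l : ℂ) * (x : ℂ))) with hhat
  -- dominated convergence to pick the quantitative parameter
  have hmeasmin : ∀ n : ℕ, MeasureTheory.AEStronglyMeasurable
      (fun l : ℝ => ‖hatf l‖ * min 2 (l ^ 2 * (2 / ((n : ℝ) + 1)))) volume := by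
    intro n
    exact (hf_hat.aestronglyMeasurable.norm).mul
      (Continuous.aestronglyMeasurable (by fun_prop))
  have htend : Filter.Tendsto
      (fun n : ℕ => ∫ l : ℝ, ‖hatf l‖ * min 2 (l ^ 2 * (2 / ((n : ℝ) + 1))))
      Filter.atTop (nhds 0) := by
    have h0 : (0 : ℝ) = ∫ _ : ℝ, (0 : ℝ) := by simp
    rw [h0]
    apply MeasureTheory.tendsto_integral_of_dominated_convergence
      (fun l : ℝ => ‖hatf l‖ * 2) hmeasmin (hf_hat.norm.mul_const 2)
    · intro n
      apply Filter.Eventually.of_forall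
      intro l
      have h1 : (0 : ℝ) ≤ l ^ 2 * (2 / ((n : ℝ) + 1)) := by positivity
      have h3 : (0 : ℝ) ≤ min 2 (l ^ 2 * (2 / ((n : ℝ) + 1))) := le_min (by norm_num) h1
      rw [Real.norm_of_nonneg (by positivity :
        (0:ℝ) ≤ ‖hatf l‖ * min 2 (l ^ 2 * (2 / ((n : ℝ) + 1))))]
      exact mul_le_mul_of_nonneg_left (min_le_left _ _) (norm_nonneg _)
    · apply Filter.Eventually.of_forall
      intro l
      have hm : Filter.Tendsto (fun n : ℕ => l ^ 2 * (2 / ((n : ℝ) + 1)))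
          Filter.atTop (nhds 0) := by
        have h2 := tendsto_one_div_add_atTop_nhds_zero_nat.const_mul (l ^ 2 * 2)
        rw [mul_zero] at h2
        apply h2.congr
        intro n
        ring
      have hmin : Filter.Tendsto (fun n : ℕ => min 2 (l ^ 2 * (2 / ((n : ℝ) + 1))))
          Filter.atTop (nhds 0) := by
        have := (tendsto_const_nhds (x := (2 : ℝ)) (f := Filter.atTop (α := ℕ))).min hm
        simpa using this
      have hfin := hmin.const_mul ‖hatf l‖
      rw [mul_zero] at hfin
      exact hfin
  obtain ⟨n, hn⟩ :=
    (htend.eventually (gt_mem_nhds (show (0 : ℝ) < 2 * Real.pi * ε by positivity))).exists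
  set δ : ℝ := 1 / ((n : ℝ) + 1) with hδdef
  have hδ : 0 < δ := by positivity
  obtain ⟨M₁, hM₁ge, hM₁⟩ := tail_small t ht hδ
  refine ⟨M₁ + 1, ?_⟩
  intro N r s hrs hrN hsN hNr hNs
  have habs_r : r ≤ |r| := le_abs_self r
  have habs_r' : -r ≤ |r| := neg_le_abs r
  have habs_s : s ≤ |s| := le_abs_self s
  have habs_s' : -s ≤ |s| := neg_le_abs s
  have htpos := t_pos t ht
  have h1 : 0 < t (N - r) := htpos _ (by omega)
  have h2 : 0 < t (N + s) := htpos _ (by omega)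
  have hkey := key_identity t N r s hrs h1 h2 f hf_cont hf_int y
  have hinv := inversion_formula f hf_cont hf_int hf_hat y
  set c : ℂ := ((1 / (2 * Real.pi) : ℝ) : ℂ) with hc
  -- sum bounds
  have hS1 : ∑ k ∈ Finset.Icc (N - s + 1) (N - r), ((t k)⁻¹) ^ 2 ≤ δ := by
    apply hM₁
    intro k hk
    rw [Finset.mem_Icc] at hk
    omega
  have hS2 : ∑ k ∈ Finset.Icc (N + r + 1) (N + s), ((t k)⁻¹) ^ 2 ≤ δ := by
    apply hM₁
    intro k hk
    rw [Finset.mem_Icc] at hk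
    omega
  -- pointwise bound on the difference of integrands
  have hpoint : ∀ l : ℝ,
      ‖Complex.exp (Complex.I * (l : ℂ) * (y : ℂ)) * Fprod t N r s l * hatf l
        - Complex.exp (Complex.I * (l : ℂ) * (y : ℂ)) * hatf l‖
      ≤ ‖hatf l‖ * min 2 (l ^ 2 * (2 / ((n : ℝ) + 1))) := by
    intro l
    have heq : Complex.exp (Complex.I * (l : ℂ) * (y : ℂ)) * Fprod t N r s l * hatf l
        - Complex.exp (Complex.I * (l : ℂ) * (y : ℂ)) * hatf l
        = Complex.exp (Complex.I * (l : ℂ) * (y : ℂ)) * hatf l * (Fprod t N r s l - 1) := by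
      ring
    have harg : Complex.I * (l : ℂ) * (y : ℂ) = Complex.I * ((l * y : ℝ) : ℂ) := by
      push_cast; ring
    have hF1 : ‖Fprod t N r s l - 1‖ ≤ min 2 (l ^ 2 * (2 / ((n : ℝ) + 1))) := by
      apply le_min
      · calc ‖Fprod t N r s l - 1‖ ≤ ‖Fprod t N r s l‖ + ‖(1 : ℂ)‖ := norm_sub_le _ _
          _ ≤ 1 + 1 := by
              have := Fprod_norm_le_one t N r s l
              simp only [norm_one]
              linarith
          _ = 2 := by norm_num
      · refine le_trans (Fprod_sub_one_le t N r s l) ?_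
        have hsum : (∑ k ∈ Finset.Icc (N - s + 1) (N - r), ((t k)⁻¹) ^ 2) +
            ∑ k ∈ Finset.Icc (N + r + 1) (N + s), ((t k)⁻¹) ^ 2 ≤ 2 / ((n : ℝ) + 1) := by
          have : (2 : ℝ) / ((n : ℝ) + 1) = δ + δ := by rw [hδdef]; ring
          rw [this]
          exact add_le_add hS1 hS2
        exact mul_le_mul_of_nonneg_left hsum (sq_nonneg l)
    rw [heq, norm_mul, norm_mul, harg, norm_exp_I_mul_real, one_mul]
    exact mul_le_mul_of_nonneg_left hF1 (norm_nonneg _)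
  -- integrability of both integrands
  have hAmeas : MeasureTheory.AEStronglyMeasurable
      (fun l : ℝ => Complex.exp (Complex.I * (l : ℂ) * (y : ℂ)) * Fprod t N r s l * hatf l)
      volume := by
    apply MeasureTheory.AEStronglyMeasurable.mul _ hf_hat.aestronglyMeasurable
    apply Continuous.aestronglyMeasurable
    exact (Complex.continuous_exp.comp (by fun_prop)).mul (Fprod_cont t N r s)
  have hBmeas : MeasureTheory.AEStronglyMeasurable
      (fun l : ℝ => Complex.exp (Complex.I * (l : ℂ) * (y : ℂ)) * hatf l) volume := by
    apply MeasureTheory.AEStronglyMeasurable.mul _ hf_hat.aestronglyMeasurable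
    apply Continuous.aestronglyMeasurable
    exact Complex.continuous_exp.comp (by fun_prop)
  have hnorme : ∀ l : ℝ, ‖Complex.exp (Complex.I * (l : ℂ) * (y : ℂ))‖ = 1 := by
    intro l
    have harg : Complex.I * (l : ℂ) * (y : ℂ) = Complex.I * ((l * y : ℝ) : ℂ) := by
      push_cast; ring
    rw [harg, norm_exp_I_mul_real]
  have hA : MeasureTheory.Integrable
      (fun l : ℝ => Complex.exp (Complex.I * (l : ℂ) * (y : ℂ)) * Fprod t N r s l * hatf l) := by
    apply MeasureTheory.Integrable.mono' hf_hat.norm hAmeas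
    apply Filter.Eventually.of_forall
    intro l
    rw [norm_mul, norm_mul, hnorme, one_mul]
    calc ‖Fprod t N r s l‖ * ‖hatf l‖ ≤ 1 * ‖hatf l‖ :=
        mul_le_mul_of_nonneg_right (Fprod_norm_le_one t N r s l) (norm_nonneg _)
      _ = ‖hatf l‖ := one_mul _
  have hB : MeasureTheory.Integrable
      (fun l : ℝ => Complex.exp (Complex.I * (l : ℂ) * (y : ℂ)) * hatf l) := by
    apply MeasureTheory.Integrable.mono' hf_hat.norm hBmeas
    apply Filter.Eventually.of_forall
    intro l
    rw [norm_mul, hnorme, one_mul]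
  -- the difference identity
  have hD : (∫ x : ℝ, f x * psiK t N r s (y - x)) - f y
      = c * ((∫ l : ℝ, Complex.exp (Complex.I * (l : ℂ) * (y : ℂ)) * Fprod t N r s l * hatf l)
          - ∫ l : ℝ, Complex.exp (Complex.I * (l : ℂ) * (y : ℂ)) * hatf l) := by
    rw [hkey, hinv]
    ring
  rw [hD, norm_mul]
  have hcnorm : ‖c‖ = 1 / (2 * Real.pi) := by
    rw [hc, Complex.norm_real, Real.norm_eq_abs, abs_of_pos (by positivity)]
  rw [hcnorm]
  have hsub : ‖(∫ l : ℝ, Complex.exp (Complex.I * (l : ℂ) * (y : ℂ)) * Fprod t N r s l * hatf l)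
      - ∫ l : ℝ, Complex.exp (Complex.I * (l : ℂ) * (y : ℂ)) * hatf l‖
      ≤ ∫ l : ℝ, ‖hatf l‖ * min 2 (l ^ 2 * (2 / ((n : ℝ) + 1))) := by
    rw [← MeasureTheory.integral_sub hA hB]
    refine le_trans (MeasureTheory.norm_integral_le_integral_norm _) ?_
    apply MeasureTheory.integral_mono (hA.sub hB).norm _ hpoint
    apply MeasureTheory.Integrable.mono' (hf_hat.norm.mul_const 2) (hmeasmin n)
    apply Filter.Eventually.of_forall
    intro l
    have h1 : (0 : ℝ) ≤ l ^ 2 * (2 / ((n : ℝ) + 1)) := by positivity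
    have h3 : (0 : ℝ) ≤ min 2 (l ^ 2 * (2 / ((n : ℝ) + 1))) := le_min (by norm_num) h1
    rw [Real.norm_of_nonneg (by positivity :
      (0:ℝ) ≤ ‖hatf l‖ * min 2 (l ^ 2 * (2 / ((n : ℝ) + 1))))]
    exact mul_le_mul_of_nonneg_left (min_le_left _ _) (norm_nonneg _)
  calc (1 / (2 * Real.pi)) *
        ‖(∫ l : ℝ, Complex.exp (Complex.I * (l : ℂ) * (y : ℂ)) * Fprod t N r s l * hatf l)
          - ∫ l : ℝ, Complex.exp (Complex.I * (l : ℂ) * (y : ℂ)) * hatf l‖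
      ≤ (1 / (2 * Real.pi)) * (2 * Real.pi * ε) := by
        apply mul_le_mul_of_nonneg_left _ (by positivity)
        exact le_trans hsub hn.le
    _ = ε := by field_simp
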